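/- With the vectors r⁰, r⁸, r¹⁸ defined from the appendix S-matrix of V_{L₂}^{S₄}, one has (1/32)·Σ_{s=0}^{27} r¹⁸(s)·r¹⁸(s)·r⁸(s) / r⁰(s) = 1. (This is the Verlinde-formula computation of the fusion coefficient N_{18,18}^{8} = 1, i.e. the fusion product M¹⁸ ⊠ M¹⁸ contains M⁸ = (V_{ℤβ+β/8})⁺ with multiplicity one, as asserted in Theorem 7.3.) -/

import Mathlib

/-! With `T_j = 2 cos (jπ/8)` and `P_j = 2 cos (jπ/16)`, the double-angle formula gives
`P_j² = 2 + T_j` and `T_j² = 2 + T_{2j}`, while the reflections `x ↦ π - x`, `x ↦ 2π - x`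
express every `T_j` with `j` odd through `T₁` and `T₃`, where `T₁² = 2 + √2`, `T₃² = 2 - √2`.
The 28 terms then add up to `8 + 8 + 16 = 32`. -/

noncomputable section

/-- `W_j = (4/3)(e^{jπi/9} + e^{−jπi/9})`. -/
def Wj (j : ℕ) : ℂ :=
  (4 / 3) * (Complex.exp ((j : ℂ) * Real.pi * Complex.I / 9) +
    Complex.exp (-((j : ℂ) * Real.pi * Complex.I / 9)))

/-- `T_j = e^{jπi/8} + e^{−jπi/8}`. -/
def Tj (j : ℕ) : ℂ :=
  Complex.exp ((j : ℂ) * Real.pi * Complex.I / 8) +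
    Complex.exp (-((j : ℂ) * Real.pi * Complex.I / 8))

/-- `P_j = e^{jπi/16} + e^{−jπi/16}`. -/
def Pj (j : ℕ) : ℂ :=
  Complex.exp ((j : ℂ) * Real.pi * Complex.I / 16) +
    Complex.exp (-((j : ℂ) * Real.pi * Complex.I / 16))

/-- `√32` times the row of the S-matrix of `V_{L₂}^{S₄}` indexed by `M⁰ = V_{L₂}^{S₄}`. -/
def r0 : Fin 28 → ℂ :=
  ![1/6, 1/6, 1/3, 1/2, 1/2, 1/3, 1/3, 2/3, 1, 1, 1, 1,
    4/3, 4/3, 4/3, 4/3, 4/3, 4/3, 1, 1, 1, 1, 1, 1, 1, 1, 2, 2]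

/-- `√32` times the row of the S-matrix of `V_{L₂}^{S₄}` indexed by `M⁸`. -/
def r8 : Fin 28 → ℂ :=
  ![1, 1, 2, -1, -1, 0, 0, 0,
    (Real.sqrt 2 : ℂ), (Real.sqrt 2 : ℂ), -(Real.sqrt 2 : ℂ), -(Real.sqrt 2 : ℂ),
    0, 0, 0, 0, 0, 0, Tj 1, Tj 3, Tj 5, Tj 7, Tj 7, Tj 5, Tj 3, Tj 1, 0, 0]

/-- `√32` times the row of the S-matrix of `V_{L₂}^{S₄}` indexed by `M¹²`. -/
def r12 : Fin 28 → ℂ :=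
  ![4/3, 4/3, -4/3, 0, 0, 4/3, 4/3, -4/3, 0, 0, 0, 0,
    Wj 1, Wj 2, Wj 4, Wj 5, Wj 7, Wj 8, 0, 0, 0, 0, 0, 0, 0, 0, 0, 0]

/-- `√32` times the row of the S-matrix of `V_{L₂}^{S₄}` indexed by `M¹³`. -/
def r13 : Fin 28 → ℂ :=
  ![4/3, 4/3, -4/3, 0, 0, -4/3, -4/3, 4/3, 0, 0, 0, 0,
    Wj 2, Wj 4, Wj 8, Wj 8, Wj 4, Wj 2, 0, 0, 0, 0, 0, 0, 0, 0, 0, 0]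

/-- `√32` times the row of the S-matrix of `V_{L₂}^{S₄}` indexed by `M¹⁸`. -/
def r18 : Fin 28 → ℂ :=
  ![1, -1, 0, 1, -1, (Real.sqrt 2 : ℂ), -(Real.sqrt 2 : ℂ), 0,
    Tj 1, Tj 7, Tj 3, Tj 5, 0, 0, 0, 0, 0, 0,
    Pj 1, Pj 3, Pj 5, Pj 7, Pj 9, Pj 11, Pj 13, Pj 15, 0, 0]

/-- `√32` times the row of the S-matrix of `V_{L₂}^{S₄}` indexed by `M¹⁹`. -/
def r19 : Fin 28 → ℂ :=
  ![1, -1, 0, 1, -1, -(Real.sqrt 2 : ℂ), (Real.sqrt 2 : ℂ), 0,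
    Tj 3, Tj 5, Tj 7, Tj 1, 0, 0, 0, 0, 0, 0,
    Pj 3, Pj 9, Pj 15, Pj 11, Pj 5, Pj 1, Pj 7, Pj 13, 0, 0]

end

open Complex
open scoped Real

lemma exp_add_exp_neg_eq_two_cos (j d : ℂ) :
    exp (j * π * I / d) + exp (-(j * π * I / d)) = 2 * cos (j * π / d) := by
  rw [two_cos]
  ring_nf

lemma Tj_eq_two_cos (j : ℕ) : Tj j = 2 * cos (j * π / 8) :=
  exp_add_exp_neg_eq_two_cos j 8

lemma Pj_eq_two_cos (j : ℕ) : Pj j = 2 * cos (j * π / 16) :=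
  exp_add_exp_neg_eq_two_cos j 16

lemma Pj_mul_self (j : ℕ) : Pj j * Pj j = 2 + Tj j := by
  rw [Pj_eq_two_cos, Tj_eq_two_cos, show (j : ℂ) * π / 8 = 2 * (j * π / 16) by ring]
  linear_combination 4 * cos_sq ((j : ℂ) * π / 16)

lemma Tj_sq (j : ℕ) : Tj j ^ 2 = 2 + Tj (2 * j) := by
  rw [Tj_eq_two_cos, Tj_eq_two_cos, Nat.cast_mul, Nat.cast_two,
    show 2 * (j : ℂ) * π / 8 = 2 * (j * π / 8) by ring]
  linear_combination 4 * cos_sq ((j : ℂ) * π / 8)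

lemma Tj_two : Tj 2 = Real.sqrt 2 := by
  rw [Tj_eq_two_cos, show ((2 : ℕ) : ℂ) * π / 8 = (π / 4 : ℝ) by push_cast; ring,
    ← ofReal_cos, Real.cos_pi_div_four]
  push_cast
  ring

lemma Tj_eq_neg_of_add_eq_eight {i j : ℕ} (h : i + j = 8) : Tj i = -Tj j := by
  have hi : (i : ℂ) = 8 - j := by rw [eq_sub_iff_add_eq]; exact_mod_cast h
  rw [Tj_eq_two_cos, Tj_eq_two_cos, hi,
    show ((8 : ℂ) - j) * π / 8 = π - j * π / 8 by ring, cos_pi_sub]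
  ring

lemma Tj_eq_of_add_eq_sixteen {i j : ℕ} (h : i + j = 16) : Tj i = Tj j := by
  have hi : (i : ℂ) = 16 - j := by rw [eq_sub_iff_add_eq]; exact_mod_cast h
  rw [Tj_eq_two_cos, Tj_eq_two_cos, hi,
    show ((16 : ℂ) - j) * π / 8 = 2 * π - j * π / 8 by ring, cos_two_pi_sub]

theorem fusion_coefficient_18_18_8 :
    (1 / 32 : ℂ) * ∑ s : Fin 28, r18 s * r18 s * r8 s / r0 s = 1 := by
  have hsqrt : ((Real.sqrt 2 : ℝ) : ℂ) ^ 2 = 2 := by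
    norm_cast; exact Real.sq_sqrt zero_le_two
  have hT1 : Tj 1 ^ 2 = 2 + Real.sqrt 2 := by rw [Tj_sq, Tj_two]
  have hT3 : Tj 3 ^ 2 = 2 - Real.sqrt 2 := by
    rw [Tj_sq, Tj_eq_neg_of_add_eq_eight (j := 2) rfl, Tj_two]; ring
  simp only [Fin.sum_univ_succ, Fin.sum_univ_zero, r18, r8, r0,
    Matrix.cons_val_zero, Matrix.cons_val_succ, Pj_mul_self]
  simp only [Tj_eq_of_add_eq_sixteen (i := 9) (j := 7) rfl,
    Tj_eq_of_add_eq_sixteen (i := 11) (j := 5) rfl, Tj_eq_of_add_eq_sixteen (i := 13) (j := 3) rfl,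
    Tj_eq_of_add_eq_sixteen (i := 15) (j := 1) rfl, Tj_eq_neg_of_add_eq_eight (i := 7) (j := 1) rfl,
    Tj_eq_neg_of_add_eq_eight (i := 5) (j := 3) rfl]
  linear_combination (1 / 8 + Real.sqrt 2 / 16) * hT1 + (1 / 8 - Real.sqrt 2 / 16) * hT3 + hsqrt / 8
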